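/- Let K ∈ ℝ, N ∈ (1,∞), D > 0 (with D ≤ π√((N−1)/K) if K > 0), and let h : [0,D] → [0,∞) be a Borel function. Then h is an MCP(K,N)-density on [0,D] if and only if for all 0 ≤ x₀ ≤ x₁ ≤ D both ( s_{K/(N−1)}(D−x₁) / s_{K/(N−1)}(D−x₀) )^{N−1} · h(x₀) ≤ h(x₁) and h(x₁) ≤ ( s_{K/(N−1)}(x₁) / s_{K/(N−1)}(x₀) )^{N−1} · h(x₀) hold (with the conventions that a ratio with zero denominator and positive numerator is +∞, and 0/0 is interpreted so that the corresponding inequality is trivially satisfied). -/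

import Mathlib

open MeasureTheory Filter

noncomputable section

/-- The comparison function `s_κ(θ)`:
`sin(√κ·θ)/√κ` if `κ > 0`, `θ` if `κ = 0`, `sinh(√(−κ)·θ)/√(−κ)` if `κ < 0`. -/
def sK (κ θ : ℝ) : ℝ :=
  if 0 < κ then Real.sin (Real.sqrt κ * θ) / Real.sqrt κ
  else if κ = 0 then θ
  else Real.sinh (Real.sqrt (-κ) * θ) / Real.sqrt (-κ)

/-- `h` is an `MCP(K,N)`-density on the interval `I ⊆ ℝ`: it is a nonnegative Borel
function satisfying
`h(t·x₁+(1−t)·x₀) ≥ (s_{K/(N−1)}((1−t)|x₁−x₀|)/s_{K/(N−1)}(|x₁−x₀|))^{N−1}·h(x₀)`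
for all `x₀, x₁ ∈ I`, `t ∈ [0,1]`; when `x₀ = x₁` the coefficient is interpreted as `1−t`,
and when `K > 0` and `|x₁−x₀| ≥ π√((N−1)/K)` the coefficient is `+∞`, forcing `h x₀ = 0`. -/
def IsMCPDensity (K N : ℝ) (I : Set ℝ) (h : ℝ → ℝ) : Prop :=
  Measurable h ∧ (∀ x ∈ I, 0 ≤ h x) ∧
  ∀ x₀ ∈ I, ∀ x₁ ∈ I, ∀ t ∈ Set.Icc (0:ℝ) 1,
    (x₀ = x₁ → (1 - t) * h x₀ ≤ h x₀) ∧
    (x₀ ≠ x₁ →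
      ((0 < K ∧ Real.pi * Real.sqrt ((N - 1) / K) ≤ |x₁ - x₀|) → h x₀ = 0) ∧
      (¬(0 < K ∧ Real.pi * Real.sqrt ((N - 1) / K) ≤ |x₁ - x₀|) →
        (sK (K / (N - 1)) ((1 - t) * |x₁ - x₀|) / sK (K / (N - 1)) |x₁ - x₀|) ^ (N - 1) * h x₀
          ≤ h (t * x₁ + (1 - t) * x₀)))

/-- `h` is a `CD(K,N)`-density on the interval `I ⊆ ℝ`. -/
def IsCDDensity (K N : ℝ) (I : Set ℝ) (h : ℝ → ℝ) : Prop :=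
  (∀ x ∈ I, 0 ≤ h x) ∧
  ∀ x₀ ∈ I, ∀ x₁ ∈ I, x₀ < x₁ → ∀ t ∈ Set.Icc (0:ℝ) 1,
    (sK (K / (N - 1)) ((1 - t) * (x₁ - x₀)) / sK (K / (N - 1)) (x₁ - x₀)) * h x₀ ^ (1 / (N - 1))
      + (sK (K / (N - 1)) (t * (x₁ - x₀)) / sK (K / (N - 1)) (x₁ - x₀)) * h x₁ ^ (1 / (N - 1))
      ≤ h ((1 - t) * x₀ + t * x₁) ^ (1 / (N - 1))

/-- The lower-bound function `f_{K,N,D}`. -/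
def fKND (K N D : ℝ) (x : ℝ) : ℝ :=
  if x = 0 ∨ x = D then 0
  else ((∫ y in (0:ℝ)..x, (sK (K / (N - 1)) (D - y) / sK (K / (N - 1)) (D - x)) ^ (N - 1)) +
        (∫ y in x..D, (sK (K / (N - 1)) y / sK (K / (N - 1)) x) ^ (N - 1)))⁻¹

/-- The model density `h^a_{K,N,D}`. -/
def hKND (K N D a : ℝ) (x : ℝ) : ℝ :=
  if x ≤ a then fKND K N D a * (sK (K / (N - 1)) (D - x) / sK (K / (N - 1)) (D - a)) ^ (N - 1)
  else fKND K N D a * (sK (K / (N - 1)) x / sK (K / (N - 1)) a) ^ (N - 1)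

/-- `v_{K,N,D}(a) = ∫₀ᵃ h^a_{K,N,D}(x) dx`. -/
def vKND (K N D a : ℝ) : ℝ := ∫ x in (0:ℝ)..a, hKND K N D a x

/-- The (outer) Minkowski content of `A` with respect to `μ`:
`liminf_{ε→0⁺} (μ(Aᵉ) − μ(A))/ε` where `Aᵉ` is the open `ε`-neighbourhood of `A`. -/
def mink (μ : Measure ℝ) (A : Set ℝ) : ℝ :=
  Filter.liminf (fun ε : ℝ => ((μ (Metric.thickening ε A)).toReal - (μ A).toReal) / ε)
    (nhdsWithin 0 (Set.Ioi 0))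

/-- The measure `μ_h = h · Leb` restricted to `[0,D]`. -/
def muh (h : ℝ → ℝ) (D : ℝ) : Measure ℝ :=
  (volume.restrict (Set.Icc (0:ℝ) D)).withDensity (fun x => ENNReal.ofReal (h x))

/-- The restricted one-dimensional isoperimetric profile `Ĩ_{K,N,D}(v)` over
`MCP(K,N)`-densities on `[0,D]` integrating to `1`. -/
def Itilde (K N D v : ℝ) : ℝ :=
  sInf { p : ℝ | ∃ h : ℝ → ℝ, IsMCPDensity K N (Set.Icc 0 D) h ∧
    (∫ x in (0:ℝ)..D, h x) = 1 ∧
    ∃ A : Set ℝ, MeasurableSet A ∧ A ⊆ Set.Icc 0 D ∧ (muh h D A).toReal = v ∧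
      p = mink (muh h D) A }

/-- The restricted one-dimensional isoperimetric profile `Ĩ^{CD}_{K,N,D}(v)` over
`CD(K,N)`-densities on `[0,D]` integrating to `1`. -/
def ItildeCD (K N D v : ℝ) : ℝ :=
  sInf { p : ℝ | ∃ h : ℝ → ℝ, IsCDDensity K N (Set.Icc 0 D) h ∧
    (∫ x in (0:ℝ)..D, h x) = 1 ∧
    ∃ A : Set ℝ, MeasurableSet A ∧ A ⊆ Set.Icc 0 D ∧ (muh h D A).toReal = v ∧
      p = mink (muh h D) A }

open Real Set

/-!
Write `κ = K/(N-1)`, `p = N-1` and `s = s_κ`. Under the diameter bound, `s ≥ 0` on `[0,D]` and `s`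
vanishes on `(0,D]` at most at `D`; this is exactly the degenerate case of the MCP definition.
The addition formula `s(a+e)s(b) - s(a)s(b+e) = s(e)s(b-a)` shows that `s(z-y)/s(z-x)` increases
when `z` is moved to the right, so for `x ≤ y ≤ z ≤ D` the MCP inequality contracting `x` towards
`z` follows from the one contracting `x` towards `D`, which is the lower bound. The reflection
`x ↦ D - x` preserves the MCP condition, turns contractions towards the left into contractions
towards the right, and turns the upper bound into the lower bound of the reflected density.
-/

lemma sK_zero (κ : ℝ) : sK κ 0 = 0 := by
  unfold sK; split_ifs <;> simp

lemma sK_nonneg {κ θ : ℝ} (hθ : 0 ≤ θ) (hπ : 0 < κ → √κ * θ ≤ π) : 0 ≤ sK κ θ := by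
  unfold sK
  split_ifs with hκ
  · exact div_nonneg (sin_nonneg_of_nonneg_of_le_pi (by positivity) (hπ hκ)) (sqrt_nonneg κ)
  · exact hθ
  · exact div_nonneg (sinh_nonneg_iff.2 (by positivity)) (sqrt_nonneg _)

lemma sK_pos {κ θ : ℝ} (hθ : 0 < θ) (hπ : 0 < κ → √κ * θ < π) : 0 < sK κ θ := by
  unfold sK
  split_ifs with hκ hκ0
  · have hs : 0 < √κ := sqrt_pos.2 hκ
    exact div_pos (sin_pos_of_pos_of_lt_pi (by positivity) (hπ hκ)) hs
  · exact hθ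
  · have hs : 0 < √(-κ) := sqrt_pos.2 (by linarith [lt_of_le_of_ne (not_lt.1 hκ) hκ0])
    exact div_pos (sinh_pos_iff.2 (by positivity)) hs

lemma sK_add_mul_sK_sub_sK_mul_sK_add (κ a b e : ℝ) :
    sK κ (a + e) * sK κ b - sK κ a * sK κ (b + e) = sK κ e * sK κ (b - a) := by
  unfold sK
  split_ifs
  · rw [mul_add, mul_add, mul_sub, sin_add, sin_add, sin_sub]; ring
  · ring
  · rw [mul_add, mul_add, mul_sub, sinh_add, sinh_add, sinh_sub]; ring

lemma sqrt_mul_le_pi_of_le {κ D θ : ℝ} (hκD : 0 < κ → √κ * D ≤ π) (hθ : θ ≤ D) :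
    0 < κ → √κ * θ ≤ π := fun hκ =>
  (mul_le_mul_of_nonneg_left hθ (sqrt_nonneg κ)).trans (hκD hκ)

lemma sK_mul_sK_add_le {κ a b e : ℝ} (ha : 0 ≤ a) (hab : a ≤ b) (he : 0 ≤ e)
    (hπ : 0 < κ → √κ * (b + e) ≤ π) : sK κ a * sK κ (b + e) ≤ sK κ (a + e) * sK κ b := by
  have hidentity := sK_add_mul_sK_sub_sK_mul_sK_add κ a b e
  have hnonneg := mul_nonneg (sK_nonneg he (sqrt_mul_le_pi_of_le hπ (by linarith)))
    (sK_nonneg (sub_nonneg.2 hab) (sqrt_mul_le_pi_of_le hπ (by linarith)))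
  linarith

section DiameterBound

variable {κ D θ : ℝ}

lemma sK_nonneg_of_le (hκD : 0 < κ → √κ * D ≤ π) (h0 : 0 ≤ θ) (hθ : θ ≤ D) : 0 ≤ sK κ θ :=
  sK_nonneg h0 (sqrt_mul_le_pi_of_le hκD hθ)

lemma sK_pos_of_lt (hκD : 0 < κ → √κ * D ≤ π) (h0 : 0 < θ) (hθ : θ < D) : 0 < sK κ θ :=
  sK_pos h0 fun hκ => (mul_lt_mul_of_pos_left hθ (sqrt_pos.2 hκ)).trans_le (hκD hκ)

lemma eq_of_sK_eq_zero (hκD : 0 < κ → √κ * D ≤ π) (h0 : 0 < θ) (hθ : θ ≤ D)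
    (hs : sK κ θ = 0) : θ = D :=
  hθ.eq_or_lt.resolve_right fun hlt => (sK_pos_of_lt hκD h0 hlt).ne' hs

lemma sK_eq_zero_iff (hκD : 0 < κ → √κ * D ≤ π) (h0 : 0 < θ) (hθ : θ ≤ D) :
    sK κ θ = 0 ↔ 0 < κ ∧ π ≤ √κ * θ := by
  constructor
  · intro hs
    by_contra! hlt
    exact (sK_pos h0 hlt).ne' hs
  · rintro ⟨hκ, hle⟩
    rw [sK, if_pos hκ, le_antisymm (sqrt_mul_le_pi_of_le hκD hθ hκ) hle, sin_pi, zero_div]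

end DiameterBound

lemma sqrt_div_eq_inv_sqrt_div (a b : ℝ) : √(a / b) = (√(b / a))⁻¹ := by
  rw [← sqrt_inv, inv_div]

lemma sqrt_mul_le_pi_of_le_pi_mul_sqrt {K N D : ℝ} (hN : 1 < N)
    (hDK : 0 < K → D ≤ π * √((N - 1) / K)) : 0 < K / (N - 1) → √(K / (N - 1)) * D ≤ π := by
  intro hκ
  have hK : 0 < K := (div_pos_iff_of_pos_right (by linarith)).1 hκ
  have := hDK hK
  rwa [sqrt_div_eq_inv_sqrt_div, ← div_eq_mul_inv, le_div_iff₀ (sqrt_pos.2 hκ), mul_comm] at this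

lemma pi_mul_sqrt_le_iff {K N d : ℝ} (hN : 1 < N) :
    (0 < K ∧ π * √((N - 1) / K) ≤ d) ↔ (0 < K / (N - 1) ∧ π ≤ √(K / (N - 1)) * d) := by
  rw [div_pos_iff_of_pos_right (by linarith : (0 : ℝ) < N - 1)]
  refine and_congr_right fun hK => ?_
  rw [sqrt_div_eq_inv_sqrt_div, ← div_eq_mul_inv,
    div_le_iff₀ (sqrt_pos.2 (div_pos hK (by linarith))), mul_comm]

def MCPToward (κ p : ℝ) (h : ℝ → ℝ) (x z : ℝ) : Prop :=
  (sK κ |z - x| = 0 → h x = 0) ∧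
    ∀ t ∈ Icc (0 : ℝ) 1,
      (sK κ ((1 - t) * |z - x|) / sK κ |z - x|) ^ p * h x ≤ h (t * z + (1 - t) * x)

def LowerComparison (κ p D : ℝ) (h : ℝ → ℝ) : Prop :=
  ∀ x₀ x₁ : ℝ, 0 ≤ x₀ → x₀ ≤ x₁ → x₁ ≤ D →
    (sK κ (D - x₀) ≠ 0 → (sK κ (D - x₁) / sK κ (D - x₀)) ^ p * h x₀ ≤ h x₁) ∧
    (sK κ (D - x₀) = 0 → sK κ (D - x₁) ≠ 0 → h x₀ = 0)

def UpperComparison (κ p D : ℝ) (h : ℝ → ℝ) : Prop :=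
  ∀ x₀ x₁ : ℝ, 0 ≤ x₀ → x₀ ≤ x₁ → x₁ ≤ D →
    sK κ x₀ ≠ 0 → h x₁ ≤ (sK κ x₁ / sK κ x₀) ^ p * h x₀

lemma forall_mem_Icc_iff_forall_convexComb {x z : ℝ} (hxz : x ≤ z) {Q : ℝ → Prop} :
    (∀ y ∈ Icc x z, Q y) ↔ ∀ t ∈ Icc (0 : ℝ) 1, Q (t * z + (1 - t) * x) := by
  rw [← segment_eq_Icc hxz, segment_eq_image, forall_mem_image]
  simp only [smul_eq_mul, add_comm]

lemma mcpToward_iff_of_lt {κ p : ℝ} {h : ℝ → ℝ} {x z : ℝ} (hxz : x < z) :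
    MCPToward κ p h x z ↔ (sK κ (z - x) = 0 → h x = 0) ∧
      ∀ y ∈ Icc x z, (sK κ (z - y) / sK κ (z - x)) ^ p * h x ≤ h y := by
  rw [MCPToward, abs_of_pos (sub_pos.2 hxz), forall_mem_Icc_iff_forall_convexComb hxz.le]
  refine and_congr_right fun _ => forall₂_congr fun t _ => ?_
  rw [show (1 - t) * (z - x) = z - (t * z + (1 - t) * x) by ring]

lemma mcpToward_comp_sub_iff {κ p : ℝ} {h : ℝ → ℝ} (a x z : ℝ) :
    MCPToward κ p (fun y => h (a - y)) x z ↔ MCPToward κ p h (a - x) (a - z) := by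
  have hdist : |a - z - (a - x)| = |z - x| := by rw [sub_sub_sub_cancel_left, abs_sub_comm]
  have hcomb (t : ℝ) : t * (a - z) + (1 - t) * (a - x) = a - (t * z + (1 - t) * x) := by ring
  simp only [MCPToward, hdist, hcomb]

section Comparison

variable {κ p D : ℝ} {h : ℝ → ℝ}

lemma LowerComparison.mcpToward (hκD : 0 < κ → √κ * D ≤ π) (hp : 0 < p)
    (hpos : ∀ x ∈ Icc 0 D, 0 ≤ h x) (hL : LowerComparison κ p D h) {x z : ℝ} (hx : 0 ≤ x)
    (hxz : x < z) (hz : z ≤ D) : MCPToward κ p h x z := by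
  have hvanish (hs : sK κ (D - x) = 0) : h x = 0 :=
    (hL x ((x + D) / 2) hx (by linarith) (by linarith)).2 hs
      (sK_pos_of_lt hκD (by linarith) (by linarith)).ne'
  rw [mcpToward_iff_of_lt hxz]
  refine ⟨fun hs => hvanish ?_, fun y hy => ?_⟩
  · rwa [show D - x = z - x by linarith [eq_of_sK_eq_zero hκD (sub_pos.2 hxz) (by linarith) hs]]
  have hhy : 0 ≤ h y := hpos y ⟨by linarith [hy.1], by linarith [hy.2]⟩
  rcases (sK_nonneg_of_le hκD (by linarith : 0 ≤ z - x) (by linarith)).eq_or_lt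
    with hzx | hzx
  · rwa [← hzx, div_zero, zero_rpow hp.ne', zero_mul]
  rcases (sK_nonneg_of_le hκD (by linarith : 0 ≤ D - x) (by linarith)).eq_or_lt
    with hDx | hDx
  · rwa [hvanish hDx.symm, mul_zero]
  have hcross := sK_mul_sK_add_le (κ := κ) (sub_nonneg.2 hy.2) (by linarith [hy.1] : z - y ≤ z - x)
    (sub_nonneg.2 hz) (sqrt_mul_le_pi_of_le hκD (by linarith))
  rw [show z - y + (D - z) = D - y by ring, show z - x + (D - z) = D - x by ring] at hcross
  calc (sK κ (z - y) / sK κ (z - x)) ^ p * h x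
      ≤ (sK κ (D - y) / sK κ (D - x)) ^ p * h x := by
        refine mul_le_mul_of_nonneg_right (rpow_le_rpow ?_ ((div_le_div_iff₀ hzx hDx).2 hcross)
          hp.le) (hpos x ⟨hx, by linarith⟩)
        exact div_nonneg (sK_nonneg_of_le hκD (by linarith [hy.2]) (by linarith [hy.1])) hzx.le
    _ ≤ h y := (hL x y hx hy.1 (by linarith [hy.2])).1 hDx.ne'

lemma lowerComparison_of_mcpToward
    (hT : ∀ x z, 0 ≤ x → x < z → z ≤ D → MCPToward κ p h x z) : LowerComparison κ p D h := by
  intro x₀ x₁ h₀ h₀₁ h₁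
  rcases (h₀₁.trans h₁).eq_or_lt with rfl | hx₀
  · obtain rfl : x₁ = x₀ := le_antisymm h₁ h₀₁
    simp [sK_zero]
  obtain ⟨hvanish, hineq⟩ := (mcpToward_iff_of_lt hx₀).1 (hT x₀ D h₀ hx₀ le_rfl)
  exact ⟨fun _ => hineq x₁ ⟨h₀₁, h₁⟩, fun hs _ => hvanish hs⟩

lemma lowerComparison_iff_forall_mcpToward (hκD : 0 < κ → √κ * D ≤ π) (hp : 0 < p)
    (hpos : ∀ x ∈ Icc 0 D, 0 ≤ h x) :
    LowerComparison κ p D h ↔ ∀ x z, 0 ≤ x → x < z → z ≤ D → MCPToward κ p h x z :=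
  ⟨fun hL _ _ hx hxz hz => hL.mcpToward hκD hp hpos hx hxz hz, lowerComparison_of_mcpToward⟩

end Comparison

lemma rpow_div_comparison_iff {a b p H₀ H₁ : ℝ} (ha : 0 ≤ a) (hb : 0 ≤ b) (hp : p ≠ 0)
    (hH₀ : 0 ≤ H₀) (hH₁ : 0 ≤ H₁) :
    ((b ≠ 0 → (a / b) ^ p * H₁ ≤ H₀) ∧ (b = 0 → a ≠ 0 → H₁ = 0)) ↔
      (a ≠ 0 → H₁ ≤ (b / a) ^ p * H₀) := by
  rcases ha.eq_or_lt with rfl | ha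
  · simp [zero_rpow hp, hH₀]
  rcases hb.eq_or_lt with rfl | hb
  · simp [zero_rpow hp, ha.ne', le_antisymm_iff, hH₁]
  rw [← inv_div b a, inv_rpow (by positivity), inv_mul_le_iff₀ (by positivity)]
  simp [ha.ne', hb.ne']

lemma forall_reflect_iff {D : ℝ} {P : ℝ → ℝ → Prop} :
    (∀ x₀ x₁ : ℝ, 0 ≤ x₀ → x₀ ≤ x₁ → x₁ ≤ D → P (D - x₁) (D - x₀)) ↔
      ∀ x₀ x₁ : ℝ, 0 ≤ x₀ → x₀ ≤ x₁ → x₁ ≤ D → P x₀ x₁ := by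
  refine ⟨fun H x₀ x₁ h₀ h₀₁ h₁ => ?_, fun H x₀ x₁ h₀ h₀₁ h₁ => H _ _ (by linarith) (by linarith)
    (by linarith)⟩
  simpa only [sub_sub_cancel] using H (D - x₁) (D - x₀) (by linarith) (by linarith) (by linarith)

lemma upperComparison_iff_lowerComparison_comp_sub {κ p D : ℝ} {h : ℝ → ℝ}
    (hκD : 0 < κ → √κ * D ≤ π) (hp : p ≠ 0) (hpos : ∀ x ∈ Icc 0 D, 0 ≤ h x) :
    UpperComparison κ p D h ↔ LowerComparison κ p D (fun x => h (D - x)) := by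
  refine Iff.symm ((forall_reflect_iff (P := fun u₀ u₁ =>
    (sK κ u₁ ≠ 0 → (sK κ u₀ / sK κ u₁) ^ p * h u₁ ≤ h u₀) ∧
      (sK κ u₁ = 0 → sK κ u₀ ≠ 0 → h u₁ = 0))).trans (forall₂_congr fun x₀ x₁ => ?_))
  refine forall₃_congr fun h₀ h₀₁ h₁ => ?_
  exact rpow_div_comparison_iff (sK_nonneg_of_le hκD h₀ (by linarith))
    (sK_nonneg_of_le hκD (by linarith) h₁) hp (hpos x₀ ⟨h₀, by linarith⟩)
    (hpos x₁ ⟨by linarith, h₁⟩)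

lemma isMCPDensity_Icc_iff {K N D : ℝ} (hN : 1 < N)
    (hDK : 0 < K → D ≤ π * √((N - 1) / K)) {h : ℝ → ℝ} (hmeas : Measurable h)
    (hpos : ∀ x ∈ Icc 0 D, 0 ≤ h x) :
    IsMCPDensity K N (Icc 0 D) h ↔
      ∀ x ∈ Icc 0 D, ∀ z ∈ Icc 0 D, x ≠ z → MCPToward (K / (N - 1)) (N - 1) h x z := by
  have hdegenerate {x z : ℝ} (hx : x ∈ Icc 0 D) (hz : z ∈ Icc 0 D) (hne : x ≠ z) :
      (0 < K ∧ π * √((N - 1) / K) ≤ |z - x|) ↔ sK (K / (N - 1)) |z - x| = 0 := by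
    have hdist : |z - x| ≤ D := by simpa [Real.dist_eq] using Real.dist_le_of_mem_Icc hz hx
    rw [pi_mul_sqrt_le_iff hN, sK_eq_zero_iff (sqrt_mul_le_pi_of_le_pi_mul_sqrt hN hDK)
      (abs_sub_pos.2 hne.symm) hdist]
  have hcomb {x z t : ℝ} (hx : x ∈ Icc 0 D) (hz : z ∈ Icc 0 D) (ht : t ∈ Icc (0 : ℝ) 1) :
      0 ≤ h (t * z + (1 - t) * x) :=
    hpos _ (convex_Icc 0 D hz hx ht.1 (sub_nonneg.2 ht.2) (add_sub_cancel t 1))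
  constructor
  · rintro ⟨-, -, H⟩ x hx z hz hne
    refine ⟨fun hs => ((H x hx z hz 0 ⟨le_rfl, zero_le_one⟩).2 hne).1
      ((hdegenerate hx hz hne).2 hs), fun t ht => ?_⟩
    by_cases hs : sK (K / (N - 1)) |z - x| = 0
    · rw [hs, div_zero, zero_rpow (by linarith), zero_mul]
      exact hcomb hx hz ht
    · exact ((H x hx z hz t ht).2 hne).2 ((hdegenerate hx hz hne).not.2 hs)
  · refine fun H => ⟨hmeas, hpos, fun x hx z hz t ht => ⟨fun _ => ?_, fun hne => ?_⟩⟩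
    · nlinarith [hpos x hx, ht.1]
    · exact ⟨fun hE => (H x hx z hz hne).1 ((hdegenerate hx hz hne).1 hE),
        fun _ => (H x hx z hz hne).2 t ht⟩

lemma forall_ne_mcpToward_iff {κ p D : ℝ} {h : ℝ → ℝ} :
    (∀ x ∈ Icc 0 D, ∀ z ∈ Icc 0 D, x ≠ z → MCPToward κ p h x z) ↔
      (∀ x z, 0 ≤ x → x < z → z ≤ D → MCPToward κ p h x z) ∧
        ∀ x z, 0 ≤ x → x < z → z ≤ D → MCPToward κ p (fun y => h (D - y)) x z := by
  constructor
  · intro H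
    refine ⟨fun x z hx hxz hz => H x ⟨hx, by linarith⟩ z ⟨by linarith, hz⟩ hxz.ne,
      fun x z hx hxz hz => ?_⟩
    exact (mcpToward_comp_sub_iff D x z).2
      (H _ ⟨by linarith, by linarith⟩ _ ⟨by linarith, by linarith⟩ (by linarith))
  · rintro ⟨Hright, Hleft⟩ x hx z hz hne
    rcases hne.lt_or_gt with hxz | hzx
    · exact Hright x z hx.1 hxz hz.2
    · simpa only [mcpToward_comp_sub_iff, sub_sub_cancel] using
        Hleft (D - x) (D - z) (by linarith [hx.2]) (by linarith) (by linarith [hz.1])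

theorem mcp_density_iff_two_sided_general (K N D : ℝ) (hN : 1 < N)
    (hDK : 0 < K → D ≤ Real.pi * Real.sqrt ((N - 1) / K))
    (h : ℝ → ℝ) (hmeas : Measurable h) (hpos : ∀ x ∈ Set.Icc (0:ℝ) D, 0 ≤ h x) :
    IsMCPDensity K N (Set.Icc 0 D) h ↔
      ∀ x₀ x₁ : ℝ, 0 ≤ x₀ → x₀ ≤ x₁ → x₁ ≤ D →
        ((sK (K / (N - 1)) (D - x₀) ≠ 0 →
            (sK (K / (N - 1)) (D - x₁) / sK (K / (N - 1)) (D - x₀)) ^ (N - 1) * h x₀ ≤ h x₁) ∧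
         (sK (K / (N - 1)) (D - x₀) = 0 → sK (K / (N - 1)) (D - x₁) ≠ 0 → h x₀ = 0)) ∧
        (sK (K / (N - 1)) x₀ ≠ 0 →
            h x₁ ≤ (sK (K / (N - 1)) x₁ / sK (K / (N - 1)) x₀) ^ (N - 1) * h x₀) := by
  have hp : 0 < N - 1 := by linarith
  have hκD := sqrt_mul_le_pi_of_le_pi_mul_sqrt hN hDK
  have hpos_reflect : ∀ x ∈ Icc 0 D, 0 ≤ h (D - x) := fun x hx =>
    hpos _ ⟨by linarith [hx.2], by linarith [hx.1]⟩
  rw [isMCPDensity_Icc_iff hN hDK hmeas hpos, forall_ne_mcpToward_iff,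
    ← lowerComparison_iff_forall_mcpToward hκD hp hpos,
    ← lowerComparison_iff_forall_mcpToward hκD hp hpos_reflect,
    ← upperComparison_iff_lowerComparison_comp_sub hκD hp.ne' hpos]
  simp only [LowerComparison, UpperComparison, forall_and]

/-- Characterization of `MCP(K,N)`-densities on `[0,D]` via the two-sided comparison
inequalities (E:MCPdef2); ratios with zero denominator and positive numerator are `+∞`
(so the lower bound forces `h x₀ = 0` and the upper bound is trivially satisfied),
and `0/0` situations make the corresponding inequality trivially satisfied. -/
theorem mcp_density_iff_two_sided (K N D : ℝ) (hN : 1 < N) (hD : 0 < D)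
    (hDK : 0 < K → D ≤ Real.pi * Real.sqrt ((N - 1) / K))
    (h : ℝ → ℝ) (hmeas : Measurable h) (hpos : ∀ x ∈ Set.Icc (0:ℝ) D, 0 ≤ h x) :
    IsMCPDensity K N (Set.Icc 0 D) h ↔
      ∀ x₀ x₁ : ℝ, 0 ≤ x₀ → x₀ ≤ x₁ → x₁ ≤ D →
        ((sK (K / (N - 1)) (D - x₀) ≠ 0 →
            (sK (K / (N - 1)) (D - x₁) / sK (K / (N - 1)) (D - x₀)) ^ (N - 1) * h x₀ ≤ h x₁) ∧
         (sK (K / (N - 1)) (D - x₀) = 0 → sK (K / (N - 1)) (D - x₁) ≠ 0 → h x₀ = 0)) ∧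
        (sK (K / (N - 1)) x₀ ≠ 0 →
            h x₁ ≤ (sK (K / (N - 1)) x₁ / sK (K / (N - 1)) x₀) ^ (N - 1) * h x₀) :=
  mcp_density_iff_two_sided_general K N D hN hDK h hmeas hpos

end
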